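/- Majority-vote decoding of the unfolded flag-gadget circuit with R = (t+1)^2 repetitions (t ≥ 1) is fault-tolerant. Let (e_s, e_f) be an error configuration of total weight at most t and let P := F^c.mulVec e_s + e_f be the observed flag pattern; for b ∈ Fin ((t+1)^2) let P_b : Fin m → ZMod 2 be the b-th subpattern P (b, ·). Then: (a) the maximal multiplicity max over Q of |{b : P_b = Q}| is at least t+1; (b) for every Q attaining this maximal multiplicity there is a unique u : Fin w → ZMod 2 with wt(u) ≤ t and H.mulVec u = Q; and (c) for this u, defining corr(u) : Fin (w+1) → ZMod 2 by corr(u) j := Σ over i : Fin w with (i : ℕ) < (j : ℕ) of u i (sum in ZMod 2), the correction is fault-tolerant: writing x := D^c.mulVec e_s + corr(u), one has min(wt x, (w+1) − wt x) ≤ wt(e_s) + wt(e_f). -/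

import Mathlib

namespace Unfold

/-- The `R`-fold stack of an `m × w` matrix `H` over `ZMod 2`. -/
def stackMatrix (R m w : ℕ) (H : Matrix (Fin m) (Fin w) (ZMod 2)) :
    Matrix (Fin R × Fin m) (Fin w) (ZMod 2) :=
  fun p j => H p.2 j

/-- Lexicographic order on flag-qubit indices `Fin R × Fin m`. -/
def lexLt {R m : ℕ} (a b : Fin R × Fin m) : Prop :=
  a.1 < b.1 ∨ (a.1 = b.1 ∧ a.2 < b.2)

instance {R m : ℕ} (a b : Fin R × Fin m) : Decidable (lexLt a b) := by
  unfold lexLt; infer_instance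

/-- `truncFirst v k` is the indicator vector of the `k` smallest (in the lexicographic
order on `Fin R × Fin m`) nonzero coordinates of `v` (all of them if `k > wt v`). -/
def truncFirst {R m : ℕ} (v : Fin R × Fin m → ZMod 2) (k : ℕ) : Fin R × Fin m → ZMod 2 :=
  fun i =>
    if v i ≠ 0 ∧ (Finset.univ.filter fun j => v j ≠ 0 ∧ lexLt j i).card < k then 1 else 0

/-- The extended column sequence `F̃₀ = 0`, `F̃ᵢ = ` column `i` of the stack of `H` for
`1 ≤ i ≤ w`, `F̃_{w+1} = 0`. -/
def Ftil (R m w : ℕ) (H : Matrix (Fin m) (Fin w) (ZMod 2)) (i : Fin (w + 2)) :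
    Fin R × Fin m → ZMod 2 :=
  if h : 1 ≤ (i : ℕ) ∧ (i : ℕ) ≤ w then
    fun p => stackMatrix R m w H p ⟨(i : ℕ) - 1, by omega⟩
  else 0

/-- The unfolding block between `F̃ᵢ` and `F̃ᵢ₊₁`: the list of columns
`F̃ᵢ + [F̃ᵢ + F̃ᵢ₊₁][k]` for `k = 0, …, wt(F̃ᵢ + F̃ᵢ₊₁) − 1`. -/
def block (R m w : ℕ) (H : Matrix (Fin m) (Fin w) (ZMod 2)) (i : Fin (w + 1)) :
    List (Fin R × Fin m → ZMod 2) :=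
  (List.range (hammingNorm (Ftil R m w H i.castSucc + Ftil R m w H i.succ))).map
    fun k => Ftil R m w H i.castSucc + truncFirst (Ftil R m w H i.castSucc + Ftil R m w H i.succ) k

/-- The unfolded column sequence `c₀, …, c_L`: concatenation of the blocks followed by
the final zero column. -/
def cols (R m w : ℕ) (H : Matrix (Fin m) (Fin w) (ZMod 2)) :
    List (Fin R × Fin m → ZMod 2) :=
  ((List.finRange (w + 1)).flatMap fun i => block R m w H i) ++ [0]

/-- Number of syndrome-error locations, `L + 1`. -/
def N (R m w : ℕ) (H : Matrix (Fin m) (Fin w) (ZMod 2)) : ℕ := (cols R m w H).length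

/-- The physical parity-check matrix `F^c` whose `p`-th column is `c_p`. -/
def Fc (R m w : ℕ) (H : Matrix (Fin m) (Fin w) (ZMod 2)) :
    Matrix (Fin R × Fin m) (Fin (N R m w H)) (ZMod 2) :=
  fun r p => (cols R m w H).get p r

/-- `dpos i` is the index at which `F̃ᵢ` occurs as the `k = 0` element of its block,
i.e. the location of the data CNOT acting on data qubit `i`. -/
def dpos (R m w : ℕ) (H : Matrix (Fin m) (Fin w) (ZMod 2)) (i : Fin (w + 1)) : ℕ :=
  ∑ j ∈ Finset.univ.filter (fun j : Fin (w + 1) => j < i), (block R m w H j).length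

/-- The data-propagation matrix `D^c`: `D^c i p = 1` iff `p ≤ dᵢ`. -/
def Dc (R m w : ℕ) (H : Matrix (Fin m) (Fin w) (ZMod 2)) :
    Matrix (Fin (w + 1)) (Fin (N R m w H)) (ZMod 2) :=
  fun i p => if (p : ℕ) ≤ dpos R m w H i then 1 else 0

end Unfold

/-!
A syndrome error at a position `p` of the `i`-th block has already turned the first `θ = k / sᵢ`
repetitions of the column from `F̃ᵢ` into `F̃ᵢ₊₁`, leaves the later ones at `F̃ᵢ`, and cuts only
repetition `θ` in the middle. So every repetition `b` that is neither cut nor hit by a flag error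
shows the syndrome `H u_b` of a data error `u_b` of weight at most `wt e_s`, and `u_b` depends on
`b` only through the set of thresholds above `b`, a chain of subsets of the support of `e_s`.
Hence the at least `(t+1)² − t` good repetitions show at most `t + 1` distinct subpatterns, and
pigeonhole gives (a). A subpattern of maximal multiplicity occurs more than `t` times, so on a
good repetition, and (b) follows from the distance of `H`. For (c), each error location
contributes to `D^c e_s + corr(u_b)` a vector within distance one of the repetition code
`{0, 𝟙}`, and distance to a linear code is subadditive.
-/

open Finset Matrix

section Hamming
variable {ι M : Type*} [Fintype ι]

theorem hammingNorm_add_le [AddZeroClass M] [DecidableEq M] (x y : ι → M) :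
    hammingNorm (x + y) ≤ hammingNorm x + hammingNorm y := by
  classical
  refine (card_le_card fun i hi => ?_).trans (card_union_le _ _)
  simp only [mem_filter, mem_univ, true_and, mem_union, Pi.add_apply] at hi ⊢
  by_contra! h
  simp [h.1, h.2] at hi

theorem hammingNorm_sum_le [AddCommMonoid M] [DecidableEq M] {κ : Type*} (s : Finset κ)
    (f : κ → ι → M) : hammingNorm (∑ p ∈ s, f p) ≤ ∑ p ∈ s, hammingNorm (f p) := by
  classical
  induction s using Finset.cons_induction with
  | empty => simp
  | cons a s ha ih =>
    rw [sum_cons, sum_cons]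
    exact (hammingNorm_add_le _ _).trans (by omega)

theorem hammingNorm_le_one_of_ne_zero_eq [Zero M] [DecidableEq M] {x : ι → M} (a : ι)
    (hx : ∀ i, x i ≠ 0 → i = a) : hammingNorm x ≤ 1 :=
  card_le_one.2 fun i hi j hj => by
    simp only [mem_filter, mem_univ, true_and] at hi hj
    rw [hx i hi, hx j hj]

theorem hammingNorm_single_le_one [Zero M] [DecidableEq M] [DecidableEq ι] (a : ι) (c : M) :
    hammingNorm (Pi.single a c : ι → M) ≤ 1 :=
  hammingNorm_le_one_of_ne_zero_eq a fun i hi => by_contra fun h => hi (by simp [h])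

theorem hammingNorm_add_one {n : ℕ} (x : Fin n → ZMod 2) :
    hammingNorm (x + 1) = n - hammingNorm x := by
  have key : ∀ c : ZMod 2, c + 1 ≠ 0 ↔ ¬ c ≠ 0 := by decide
  unfold hammingNorm
  simp only [Pi.add_apply, Pi.one_apply, key]
  rw [filter_not, card_sdiff_of_subset (filter_subset _ _), card_univ, Fintype.card_fin]

end Hamming

/-- Hamming distance to the repetition code `{0, 𝟙}`. -/
def repDist {n : ℕ} (x : Fin n → ZMod 2) : ℕ := min (hammingNorm x) (n - hammingNorm x)

theorem repDist_le_hammingNorm_add {n : ℕ} (x : Fin n → ZMod 2) (c : ZMod 2) :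
    repDist x ≤ hammingNorm (x + fun _ => c) := by
  rcases (by decide : ∀ c : ZMod 2, c = 0 ∨ c = 1) c with rfl | rfl
  · exact (min_le_left _ _).trans (by rw [← Pi.zero_def, add_zero])
  · exact (min_le_right _ _).trans (hammingNorm_add_one x).ge

theorem exists_hammingNorm_add_eq_repDist {n : ℕ} (x : Fin n → ZMod 2) :
    ∃ c : ZMod 2, hammingNorm (x + fun _ => c) = repDist x := by
  rcases min_choice (hammingNorm x) (n - hammingNorm x) with h | h
  · exact ⟨0, by rw [← Pi.zero_def, add_zero, repDist, h]⟩
  · exact ⟨1, by rw [repDist, h]; exact hammingNorm_add_one x⟩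

theorem repDist_add_le {n : ℕ} (x y : Fin n → ZMod 2) :
    repDist (x + y) ≤ repDist x + repDist y := by
  obtain ⟨c, hc⟩ := exists_hammingNorm_add_eq_repDist x
  obtain ⟨d, hd⟩ := exists_hammingNorm_add_eq_repDist y
  calc repDist (x + y) ≤ hammingNorm ((x + fun _ => c) + (y + fun _ => d)) := by
        convert repDist_le_hammingNorm_add (x + y) (c + d) using 2
        ext i; simp only [Pi.add_apply]; ring
    _ ≤ repDist x + repDist y := hc ▸ hd ▸ hammingNorm_add_le _ _

theorem repDist_sum_le {n : ℕ} {κ : Type*} (s : Finset κ) (f : κ → Fin n → ZMod 2) :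
    repDist (∑ p ∈ s, f p) ≤ ∑ p ∈ s, repDist (f p) := by
  classical
  induction s using Finset.cons_induction with
  | empty => simp [repDist]
  | cons a s ha ih =>
    rw [sum_cons, sum_cons]
    exact (repDist_add_le _ _).trans (by omega)

theorem Fin.sum_filter_lt_succ {M : Type*} [AddCommMonoid M] {n : ℕ} (g : Fin (n + 1) → M)
    (i : Fin n) :
    ∑ j ∈ univ.filter (· < i.succ), g j = g 0 + ∑ j ∈ univ.filter (· < i), g j.succ := by
  simp only [sum_filter, Fin.sum_univ_succ, Fin.succ_pos, if_true, Fin.succ_lt_succ_iff]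

theorem List.length_flatMap_finRange {α : Type*} {n : ℕ} (f : Fin n → List α) :
    ((List.finRange n).flatMap f).length = ∑ i, (f i).length := by
  rw [List.length_flatMap, Fin.sum_univ_def]

theorem List.exists_getElem_flatMap_finRange {α : Type*} {n : ℕ} (f : Fin n → List α) (p : ℕ)
    (hp : p < ((List.finRange n).flatMap f).length) :
    ∃ i : Fin n, ∃ k, ∃ hk : k < (f i).length,
      p = ∑ j ∈ univ.filter (· < i), (f j).length + k ∧
      ((List.finRange n).flatMap f)[p] = (f i)[k] := by
  induction n generalizing p with
  | zero => simp at hp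
  | succ n ih =>
    simp only [List.finRange_succ, List.flatMap_cons, List.flatMap_map] at hp ⊢
    rw [List.getElem_append]
    split_ifs with h0
    · exact ⟨0, p, h0, by simp, rfl⟩
    · rw [List.length_append] at hp
      obtain ⟨i, k, hk, hpk, hget⟩ := ih (fun i => f i.succ) (p - (f 0).length) (by omega)
      refine ⟨i.succ, k, hk, ?_, hget⟩
      rw [Fin.sum_filter_lt_succ]
      omega

theorem Finset.card_image_filter_lt_le {ι : Type*} [DecidableEq ι] (S : Finset ι) (θ : ι → ℕ)
    (T : Finset ℕ) : (T.image fun b => S.filter (b < θ ·)).card ≤ S.card + 1 := by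
  have hchain : ∀ b b', b ≤ b' → S.filter (b' < θ ·) ⊆ S.filter (b < θ ·) :=
    fun b b' h => monotone_filter_right S fun p _ hp => lt_of_le_of_lt h hp
  calc (T.image fun b => S.filter (b < θ ·)).card ≤ (range (S.card + 1)).card := by
        refine card_le_card_of_injOn card (fun X hX => ?_) fun X hX Y hY hXY => ?_
        · obtain ⟨b, -, rfl⟩ := mem_image.1 hX
          exact mem_range.2 (Nat.lt_succ_of_le (card_le_card (filter_subset _ _)))
        · obtain ⟨b, -, rfl⟩ := mem_image.1 hX
          obtain ⟨b', -, rfl⟩ := mem_image.1 hY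
          rcases le_total b b' with h | h
          · exact (eq_of_subset_of_card_le (hchain b b' h) hXY.le).symm
          · exact eq_of_subset_of_card_le (hchain b' b h) hXY.ge
    _ = S.card + 1 := card_range _

theorem Finset.card_image_sum_ite_lt_le {ι M : Type*} [DecidableEq ι] [AddCommMonoid M]
    [DecidableEq M] (S : Finset ι) (θ : ι → ℕ) (A B : ι → M) (T : Finset ℕ) :
    (T.image fun b => ∑ p ∈ S, if b < θ p then A p else B p).card ≤ S.card + 1 := by
  have hfactor : (T.image fun b => ∑ p ∈ S, if b < θ p then A p else B p) =
      (T.image fun b => S.filter (b < θ ·)).image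
        fun X => ∑ p ∈ S, if p ∈ X then A p else B p := by
    rw [image_image]
    refine image_congr fun b _ => sum_congr rfl fun p hp => ?_
    simp [hp]
  rw [hfactor]
  exact card_image_le.trans (card_image_filter_lt_le S θ T)

theorem Finset.exists_le_card_filter_eq {α β : Type*} [Fintype α] [DecidableEq β] {f : α → β}
    {G : Finset α} {k : ℕ} (himg : (G.image f).card ≤ k + 1) (hG : k * (k + 1) < G.card) :
    ∃ y, k + 1 ≤ (univ.filter (f · = y)).card := by
  obtain ⟨y, -, hy⟩ := exists_lt_card_fiber_of_mul_lt_card_of_maps_to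
    (fun a ha => mem_image_of_mem f ha) ((Nat.mul_le_mul_right k himg).trans_lt (by linarith))
  exact ⟨y, hy.trans_le (card_le_card (filter_subset_filter _ (subset_univ G)))⟩

theorem Matrix.mulVec_eq_sum_support {ι κ : Type*} [Fintype κ] (F : Matrix ι κ (ZMod 2))
    (e : κ → ZMod 2) : F *ᵥ e = ∑ p ∈ univ.filter (e · ≠ 0), fun r => F r p := by
  have he : ∀ c : ZMod 2, c ≠ 0 → c = 1 := by decide
  ext r
  simp only [mulVec, dotProduct, Finset.sum_apply, sum_filter]
  refine sum_congr rfl fun p _ => ?_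
  split_ifs with hp
  · rw [he _ hp, mul_one]
  · rw [not_not.1 hp, mul_zero]

theorem Matrix.existsUnique_mulVec_eq_of_hammingNorm_le {ι κ α : Type*} [Fintype κ] [Ring α]
    [DecidableEq α] {t : ℕ} {H : Matrix ι κ α}
    (hH : ∀ v : κ → α, v ≠ 0 → hammingNorm v ≤ 2 * t → H *ᵥ v ≠ 0) {u₀ : κ → α}
    (hu₀ : hammingNorm u₀ ≤ t) : ∃! u, hammingNorm u ≤ t ∧ H *ᵥ u = H *ᵥ u₀ := by
  refine ⟨u₀, ⟨hu₀, rfl⟩, fun u ⟨hu, hHu⟩ => ?_⟩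
  by_contra hne
  refine hH (u - u₀) (sub_ne_zero.2 hne) ?_ (by rw [mulVec_sub, hHu, sub_self])
  rw [← neg_add_eq_sub, ← hammingDist_eq_hammingNorm]
  have := hammingDist_triangle u₀ 0 u
  rw [hammingDist_zero_right, hammingDist_zero_left] at this
  omega

/-- The paper's correction `corr(u)`. -/
def prefixParity {M : Type*} [AddCommMonoid M] {w : ℕ} (u : Fin w → M) : Fin (w + 1) → M :=
  fun j => ∑ i ∈ univ.filter (fun i : Fin w => (i : ℕ) < j), u i

@[simp]
theorem prefixParity_zero {M : Type*} [AddCommMonoid M] {w : ℕ} :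
    prefixParity (0 : Fin w → M) = 0 := by
  ext j
  simp [prefixParity]

theorem prefixParity_sum {M ι : Type*} [AddCommMonoid M] {w : ℕ} (s : Finset ι)
    (u : ι → Fin w → M) : prefixParity (∑ p ∈ s, u p) = ∑ p ∈ s, prefixParity (u p) := by
  ext j
  simp only [prefixParity, Finset.sum_apply]
  exact sum_comm

/-- Each error location `p` cuts the repetition `θ p` of the flag matrix `F`: every other
repetition `b` sees it as the data error `A p` (if `b < θ p`) or `B p` (if `b > θ p`), and
correcting by either one leaves a data error within distance one of the repetition code. -/
structure ThresholdModel {R m w : ℕ} {ι : Type*} (H : Matrix (Fin m) (Fin w) (ZMod 2))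
    (F : Matrix (Fin R × Fin m) ι (ZMod 2)) (D : Matrix (Fin (w + 1)) ι (ZMod 2)) where
  θ : ι → ℕ
  A : ι → Fin w → ZMod 2
  B : ι → Fin w → ZMod 2
  hammingNorm_A_le : ∀ p, hammingNorm (A p) ≤ 1
  hammingNorm_B_le : ∀ p, hammingNorm (B p) ≤ 1
  col_eq : ∀ p (b : Fin R), (b : ℕ) ≠ θ p →
    (fun j => F (b, j) p) = H *ᵥ if (b : ℕ) < θ p then A p else B p
  repDist_A_le : ∀ p, repDist ((fun j => D j p) + prefixParity (A p)) ≤ 1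
  repDist_B_le : ∀ p, repDist ((fun j => D j p) + prefixParity (B p)) ≤ 1

namespace ThresholdModel

variable {R m w : ℕ} {ι : Type*} {H : Matrix (Fin m) (Fin w) (ZMod 2)}
  {F : Matrix (Fin R × Fin m) ι (ZMod 2)} {D : Matrix (Fin (w + 1)) ι (ZMod 2)}
  (M : ThresholdModel H F D)

def inducedError (p : ι) (b : ℕ) : Fin w → ZMod 2 := if b < M.θ p then M.A p else M.B p

theorem hammingNorm_inducedError_le (p : ι) (b : ℕ) : hammingNorm (M.inducedError p b) ≤ 1 := by
  unfold inducedError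
  split_ifs
  exacts [M.hammingNorm_A_le p, M.hammingNorm_B_le p]

variable [Fintype ι] (e_s : ι → ZMod 2) (e_f : Fin R × Fin m → ZMod 2)

def seenError (b : ℕ) : Fin w → ZMod 2 := ∑ p ∈ univ.filter (e_s · ≠ 0), M.inducedError p b

def goodReps : Finset (Fin R) :=
  univ.filter fun b => (∀ j, e_f (b, j) = 0) ∧ ∀ p, e_s p ≠ 0 → (b : ℕ) ≠ M.θ p

theorem hammingNorm_seenError_le (b : ℕ) : hammingNorm (M.seenError e_s b) ≤ hammingNorm e_s :=
  (hammingNorm_sum_le _ _).trans <|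
    (sum_le_sum (g := fun _ => 1) fun p _ => M.hammingNorm_inducedError_le p b).trans_eq
      (card_eq_sum_ones _).symm

theorem card_image_seenError_le (T : Finset ℕ) :
    (T.image (M.seenError e_s)).card ≤ hammingNorm e_s + 1 := by
  classical
  exact card_image_sum_ite_lt_le _ M.θ M.A M.B T

theorem card_compl_goodReps_le :
    (M.goodReps e_s e_f)ᶜ.card ≤ hammingNorm e_s + hammingNorm e_f := by
  have hflag : (univ.filter fun b : Fin R => ∃ j, e_f (b, j) ≠ 0).card ≤ hammingNorm e_f := by
    refine (card_le_card (t := (univ.filter (e_f · ≠ 0)).image Prod.fst) fun b hb => ?_).trans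
      card_image_le
    obtain ⟨j, hj⟩ := (mem_filter.1 hb).2
    exact mem_image.2 ⟨(b, j), by simpa using hj, rfl⟩
  have hcut : (univ.filter fun b : Fin R => ∃ p, e_s p ≠ 0 ∧ (b : ℕ) = M.θ p).card ≤
      hammingNorm e_s := by
    refine (card_le_card_of_injOn (fun b : Fin R => (b : ℕ)) (fun b hb => ?_)
      fun _ _ _ _ h => Fin.ext h).trans (card_image_le (s := univ.filter (e_s · ≠ 0)) (f := M.θ))
    obtain ⟨p, hp, hb⟩ := (mem_filter.1 hb).2
    exact mem_image.2 ⟨p, by simpa using hp, hb.symm⟩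
  have hcompl : (M.goodReps e_s e_f)ᶜ ⊆ (univ.filter fun b : Fin R => ∃ p, e_s p ≠ 0 ∧
      (b : ℕ) = M.θ p) ∪ univ.filter fun b : Fin R => ∃ j, e_f (b, j) ≠ 0 := fun b hb => by
    simp only [goodReps, mem_compl, mem_filter, mem_univ, true_and, mem_union] at hb ⊢
    by_contra! h
    exact hb ⟨h.2, h.1⟩
  exact (card_le_card hcompl).trans ((card_union_le _ _).trans (add_le_add hcut hflag))

theorem subpattern_eq {b : Fin R} (hb : b ∈ M.goodReps e_s e_f) :
    (fun j => (F *ᵥ e_s + e_f) (b, j)) = H *ᵥ M.seenError e_s b := by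
  obtain ⟨hflag, hcut⟩ := (mem_filter.1 hb).2
  ext j
  rw [Pi.add_apply, hflag, add_zero, mulVec_eq_sum_support, seenError, mulVec_sum,
    Finset.sum_apply, Finset.sum_apply]
  refine sum_congr rfl fun p hp => ?_
  exact congrFun (M.col_eq p b (hcut p (mem_filter.1 hp).2)) j

theorem card_image_subpattern_le :
    ((M.goodReps e_s e_f).image fun b j => (F *ᵥ e_s + e_f) (b, j)).card ≤ hammingNorm e_s + 1 := by
  have hfactor : ((M.goodReps e_s e_f).image fun b j => (F *ᵥ e_s + e_f) (b, j)) =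
      (((M.goodReps e_s e_f).image fun b : Fin R => (b : ℕ)).image (M.seenError e_s)).image
        (H *ᵥ ·) := by
    rw [image_image, image_image]
    exact image_congr fun b hb => M.subpattern_eq e_s e_f hb
  rw [hfactor]
  exact card_image_le.trans (M.card_image_seenError_le e_s _)

theorem repDist_correction_le (b : ℕ) :
    repDist (D *ᵥ e_s + prefixParity (M.seenError e_s b)) ≤ hammingNorm e_s := by
  rw [mulVec_eq_sum_support, seenError, prefixParity_sum, ← sum_add_distrib]
  refine (repDist_sum_le _ _).trans
    ((sum_le_sum (g := fun _ => 1) fun p _ => ?_).trans_eq (card_eq_sum_ones _).symm)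
  unfold inducedError
  split_ifs
  exacts [M.repDist_A_le p, M.repDist_B_le p]

end ThresholdModel

namespace Unfold

variable {R m w : ℕ} (H : Matrix (Fin m) (Fin w) (ZMod 2))

/-- `F̃ᵢ` is the stack of `H *ᵥ unitExt w i` (see `Ftil_apply`). -/
def unitExt (w : ℕ) (i : Fin (w + 2)) : Fin w → ZMod 2 :=
  if h : 1 ≤ (i : ℕ) ∧ (i : ℕ) ≤ w then Pi.single ⟨i - 1, by omega⟩ 1 else 0

theorem unitExt_apply (i : Fin (w + 2)) (j : Fin w) :
    unitExt w i j = if 1 ≤ (i : ℕ) ∧ (i : ℕ) ≤ w ∧ (j : ℕ) = i - 1 then 1 else 0 := by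
  unfold unitExt
  by_cases h : 1 ≤ (i : ℕ) ∧ (i : ℕ) ≤ w
  · rw [dif_pos h, Pi.single_apply]
    simp only [Fin.ext_iff]
    split_ifs <;> first | rfl | (exfalso; omega)
  · rw [dif_neg h, if_neg (by tauto), Pi.zero_apply]

theorem unitExt_castSucc_add_succ_ne_zero (hw : 1 ≤ w) (i : Fin (w + 1)) :
    unitExt w i.castSucc + unitExt w i.succ ≠ 0 := by
  intro h
  have hj := congrFun h ⟨min i (w - 1), by omega⟩
  simp only [Pi.add_apply, unitExt_apply, Fin.val_castSucc, Fin.val_succ, Pi.zero_apply] at hj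
  have := i.isLt
  split_ifs at hj <;> first | omega | exact absurd hj (by decide)

theorem hammingNorm_unitExt_le (i : Fin (w + 2)) : hammingNorm (unitExt w i) ≤ 1 := by
  unfold unitExt
  split_ifs
  · exact hammingNorm_single_le_one _ _
  · simp

theorem Ftil_apply (i : Fin (w + 2)) (q : Fin R × Fin m) :
    Ftil R m w H i q = (H *ᵥ unitExt w i) q.2 := by
  unfold Ftil unitExt stackMatrix
  split_ifs <;> simp [mulVec_single]

def blockWeight (i : Fin (w + 1)) : ℕ :=
  hammingNorm (H *ᵥ (unitExt w i.castSucc + unitExt w i.succ))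

theorem blockWeight_pos (hw : 1 ≤ w)
    (hH : ∀ v : Fin w → ZMod 2, v ≠ 0 → hammingNorm v ≤ 2 → H *ᵥ v ≠ 0) (i : Fin (w + 1)) :
    0 < blockWeight H i :=
  hammingNorm_pos_iff.2 <| hH _ (unitExt_castSucc_add_succ_ne_zero hw i) <|
    (hammingNorm_add_le _ _).trans
      (add_le_add (hammingNorm_unitExt_le _) (hammingNorm_unitExt_le _))

theorem Ftil_add_Ftil (i : Fin (w + 1)) :
    Ftil R m w H i.castSucc + Ftil R m w H i.succ =
      fun q => (H *ᵥ (unitExt w i.castSucc + unitExt w i.succ)) q.2 := by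
  ext q
  simp [Ftil_apply, mulVec_add]

theorem hammingNorm_comp_snd {M : Type*} [Zero M] [DecidableEq M] (v : Fin m → M) :
    hammingNorm (fun q : Fin R × Fin m => v q.2) = R * hammingNorm v := by
  have : univ.filter (fun q : Fin R × Fin m => v q.2 ≠ 0) = univ ×ˢ univ.filter (v · ≠ 0) := by
    ext q; simp
  simp only [hammingNorm, this, card_product, card_univ, Fintype.card_fin]

theorem block_length (i : Fin (w + 1)) : (block R m w H i).length = R * blockWeight H i := by
  rw [block, List.length_map, List.length_range, Ftil_add_Ftil, hammingNorm_comp_snd, blockWeight]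

theorem card_filter_lexLt_comp_snd (v : Fin m → ZMod 2) (b : Fin R) (j : Fin m) :
    (univ.filter fun q : Fin R × Fin m => v q.2 ≠ 0 ∧ lexLt q (b, j)).card =
      b * hammingNorm v + (univ.filter fun j' => v j' ≠ 0 ∧ j' < j).card := by
  have hsplit : (univ.filter fun q : Fin R × Fin m => v q.2 ≠ 0 ∧ lexLt q (b, j)) =
      Iio b ×ˢ univ.filter (v · ≠ 0) ∪ {b} ×ˢ univ.filter fun j' => v j' ≠ 0 ∧ j' < j := by
    ext ⟨b', j'⟩
    rw [mem_filter]
    simp only [lexLt, mem_filter, mem_univ, true_and, mem_union, mem_product, mem_Iio,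
      mem_singleton]
    tauto
  rw [hsplit, card_union_of_disjoint, card_product, card_product, Fin.card_Iio, card_singleton,
    one_mul, hammingNorm]
  exact disjoint_left.2 fun q hq hq' => by
    simp only [mem_product, mem_Iio, mem_singleton] at hq hq'
    exact hq.1.ne hq'.1

theorem truncFirst_comp_snd_of_succ_mul_le (v : Fin m → ZMod 2) {k : ℕ} {b : Fin R}
    (h : (b + 1) * hammingNorm v ≤ k) (j : Fin m) :
    truncFirst (fun q : Fin R × Fin m => v q.2) k (b, j) = v j := by
  have hv : ∀ c : ZMod 2, c ≠ 0 → c = 1 := by decide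
  unfold truncFirst
  by_cases hj : v j = 0
  · simp [hj]
  · have hlt : (univ.filter fun j' => v j' ≠ 0 ∧ j' < j).card < hammingNorm v :=
      card_lt_card (ssubset_iff_of_subset (monotone_filter_right _ fun _ _ h => h.1) |>.2
        ⟨j, by simp [hj], by simp⟩)
    rw [if_pos ⟨hj, by rw [card_filter_lexLt_comp_snd]; nlinarith⟩, hv _ hj]

theorem truncFirst_comp_snd_of_le_mul (v : Fin m → ZMod 2) {k : ℕ} {b : Fin R}
    (h : k ≤ b * hammingNorm v) (j : Fin m) :
    truncFirst (fun q : Fin R × Fin m => v q.2) k (b, j) = 0 := by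
  unfold truncFirst
  rw [if_neg fun hc => by rw [card_filter_lexLt_comp_snd] at hc; omega]

theorem block_col_restrict (i : Fin (w + 1)) (k : ℕ) (hs : 0 < blockWeight H i) (b : Fin R)
    (hb : (b : ℕ) ≠ k / blockWeight H i) :
    (fun j => (Ftil R m w H i.castSucc +
      truncFirst (Ftil R m w H i.castSucc + Ftil R m w H i.succ) k) (b, j)) =
      H *ᵥ if (b : ℕ) < k / blockWeight H i then unitExt w i.succ else unitExt w i.castSucc := by
  ext j
  rw [Ftil_add_Ftil, Pi.add_apply, Ftil_apply]
  split_ifs with hlt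
  · rw [truncFirst_comp_snd_of_succ_mul_le _ ((Nat.le_div_iff_mul_le hs).1 hlt), mulVec_add,
      Pi.add_apply, ← add_assoc, CharTwo.add_self_eq_zero, zero_add]
  · rw [truncFirst_comp_snd_of_le_mul, add_zero]
    have := (Nat.div_lt_iff_lt_mul hs).1 (lt_of_le_of_ne (not_lt.1 hlt) (Ne.symm hb))
    exact le_of_lt (by simpa [blockWeight] using this)

/-- The paper's `L`, the index of the final zero column. -/
def lastIdx : ℕ := ∑ i, (block R m w H i).length

theorem N_eq_lastIdx_add_one : N R m w H = lastIdx (R := R) H + 1 := by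
  rw [N, cols, List.length_append, List.length_flatMap_finRange, lastIdx, List.length_singleton]

theorem dpos_add_length_le_dpos {i j : Fin (w + 1)} (h : i < j) :
    dpos R m w H i + (block R m w H i).length ≤ dpos R m w H j := by
  have hsub : insert i (univ.filter (· < i)) ⊆ univ.filter (· < j) := fun l hl => by
    simp only [mem_insert, mem_filter, mem_univ, true_and] at hl ⊢
    rcases hl with rfl | hl
    exacts [h, hl.trans h]
  have := sum_le_sum_of_subset (f := fun l => (block R m w H l).length) hsub
  rwa [sum_insert (by simp), add_comm] at this

theorem dpos_add_length_le_lastIdx (i : Fin (w + 1)) :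
    dpos R m w H i + (block R m w H i).length ≤ lastIdx (R := R) H := by
  have := sum_le_sum_of_subset (f := fun l => (block R m w H l).length)
    (subset_univ (insert i (univ.filter (· < i))))
  rwa [sum_insert (by simp), add_comm] at this

theorem le_dpos_iff (hlen : ∀ i, 0 < (block R m w H i).length) {i : Fin (w + 1)} {k : ℕ}
    (hk : k < (block R m w H i).length) (j : Fin (w + 1)) :
    dpos R m w H i + k ≤ dpos R m w H j ↔ i < j ∨ (i = j ∧ k = 0) := by
  rcases lt_trichotomy i j with h | rfl | h
  · have := dpos_add_length_le_dpos (R := R) H h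
    simp only [h, true_or, iff_true]
    omega
  · simp
  · have := dpos_add_length_le_dpos (R := R) H h
    have := hlen j
    simp only [h.not_gt, h.ne', false_and, or_self, iff_false]
    omega

theorem cols_get_of_lt (p : Fin (N R m w H)) (hp : (p : ℕ) < lastIdx (R := R) H) :
    ∃ i k, k < (block R m w H i).length ∧ (p : ℕ) = dpos R m w H i + k ∧
      (cols R m w H).get p = Ftil R m w H i.castSucc +
        truncFirst (Ftil R m w H i.castSucc + Ftil R m w H i.succ) k := by
  have hflat : (p : ℕ) < ((List.finRange (w + 1)).flatMap (block R m w H)).length := by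
    rwa [List.length_flatMap_finRange]
  obtain ⟨i, k, hk, hpk, hget⟩ := List.exists_getElem_flatMap_finRange _ _ hflat
  refine ⟨i, k, hk, by rw [hpk, dpos], ?_⟩
  show ((List.finRange (w + 1)).flatMap (block R m w H) ++ [0])[(p : ℕ)] = _
  rw [List.getElem_append_left hflat, hget]
  simp [block]

theorem cols_get_lastIdx (p : Fin (N R m w H)) (hp : (p : ℕ) = lastIdx (R := R) H) :
    (cols R m w H).get p = 0 := by
  show ((List.finRange (w + 1)).flatMap (block R m w H) ++ [0])[(p : ℕ)] = _
  rw [List.getElem_append_right (by rw [List.length_flatMap_finRange, hp, lastIdx])]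
  simp [hp, lastIdx]

theorem prefixParity_unitExt (a : Fin (w + 2)) (j : Fin (w + 1)) :
    prefixParity (unitExt w a) j =
      if 1 ≤ (a : ℕ) ∧ (a : ℕ) ≤ w ∧ (a : ℕ) - 1 < j then 1 else 0 := by
  unfold prefixParity unitExt
  split_ifs with h h' h'
  · rw [sum_pi_single', if_pos (by simpa using h'.2.2)]
  · rw [sum_pi_single', if_neg (by simp only [mem_filter, mem_univ, true_and]; omega)]
  · exact absurd ⟨h'.1, h'.2.1⟩ h
  · simp

theorem repDist_add_prefixParity_unitExt_succ_le (i : Fin (w + 1)) (k : ℕ) :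
    repDist ((fun j => if i < j ∨ (i = j ∧ k = 0) then 1 else 0) +
      prefixParity (unitExt w i.succ)) ≤ 1 := by
  refine (repDist_le_hammingNorm_add _ 0).trans (hammingNorm_le_one_of_ne_zero_eq i fun j hj => ?_)
  simp only [Pi.add_apply, prefixParity_unitExt, Fin.val_succ, add_zero, Fin.lt_def,
    Fin.ext_iff] at hj ⊢
  have := j.isLt
  split_ifs at hj <;> first | omega | exact absurd hj (by decide)

theorem repDist_add_prefixParity_unitExt_castSucc_le (i : Fin (w + 1)) (k : ℕ) :
    repDist ((fun j => if i < j ∨ (i = j ∧ k = 0) then 1 else 0) +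
      prefixParity (unitExt w i.castSucc)) ≤ 1 := by
  -- in block `0` the uncorrected error flips every data qubit except possibly the first
  refine (repDist_le_hammingNorm_add _ (if (i : ℕ) = 0 then 1 else 0)).trans
    (hammingNorm_le_one_of_ne_zero_eq i fun j hj => ?_)
  simp only [Pi.add_apply, prefixParity_unitExt, Fin.val_castSucc, Fin.lt_def,
    Fin.ext_iff] at hj ⊢
  have := i.isLt
  split_ifs at hj <;> first | omega | exact absurd hj (by decide)

theorem Dc_apply_dpos_add (hlen : ∀ i, 0 < (block R m w H i).length) {i : Fin (w + 1)} {k : ℕ}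
    (hk : k < (block R m w H i).length) (p : Fin (N R m w H)) (hp : (p : ℕ) = dpos R m w H i + k)
    (j : Fin (w + 1)) : Dc R m w H j p = if i < j ∨ (i = j ∧ k = 0) then 1 else 0 := by
  simp only [Dc, hp, le_dpos_iff H hlen hk]

theorem exists_thresholdModel_at (hlen : ∀ i, 0 < (block R m w H i).length)
    (p : Fin (N R m w H)) :
    ∃ (θ : ℕ) (A B : Fin w → ZMod 2), hammingNorm A ≤ 1 ∧ hammingNorm B ≤ 1 ∧
      (∀ b : Fin R, (b : ℕ) ≠ θ →
        (fun j => Fc R m w H (b, j) p) = H *ᵥ if (b : ℕ) < θ then A else B) ∧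
      repDist ((fun j => Dc R m w H j p) + prefixParity A) ≤ 1 ∧
      repDist ((fun j => Dc R m w H j p) + prefixParity B) ≤ 1 := by
  have hpN : (p : ℕ) < lastIdx (R := R) H + 1 := N_eq_lastIdx_add_one (R := R) H ▸ p.isLt
  rcases (Nat.lt_succ_iff.1 hpN).lt_or_eq with hp | hp
  · obtain ⟨i, k, hk, hpk, hcol⟩ := cols_get_of_lt H p hp
    have hs : 0 < blockWeight H i := by
      rw [block_length] at hk
      exact Nat.pos_of_mul_pos_left (hk.trans_le' (Nat.zero_le k))
    have hD := funext (Dc_apply_dpos_add H hlen hk p hpk)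
    refine ⟨k / blockWeight H i, unitExt w i.succ, unitExt w i.castSucc,
      hammingNorm_unitExt_le _, hammingNorm_unitExt_le _, fun b hb => ?_, ?_, ?_⟩
    · rw [← block_col_restrict H i k hs b hb, ← hcol]
      rfl
    · rw [hD]; exact repDist_add_prefixParity_unitExt_succ_le i k
    · rw [hD]; exact repDist_add_prefixParity_unitExt_castSucc_le i k
  · have hD : (fun j => Dc R m w H j p) = 0 := by
      ext j
      have := dpos_add_length_le_lastIdx (R := R) H j
      have := hlen j
      simp only [Dc, Pi.zero_apply, ite_eq_right_iff]
      omega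
    refine ⟨0, 0, 0, by simp, by simp, fun b _ => ?_, ?_, ?_⟩
    · ext j
      simp [Fc, cols_get_lastIdx H p hp]
    all_goals simp [hD, repDist]

theorem nonempty_thresholdModel (hlen : ∀ i, 0 < (block R m w H i).length) :
    Nonempty (ThresholdModel H (Fc R m w H) (Dc R m w H)) := by
  choose θ A B hA hB hcol hrA hrB using exists_thresholdModel_at H hlen
  exact ⟨⟨θ, A, B, hA, hB, hcol, hrA, hrB⟩⟩

end Unfold

open Unfold in
theorem majority_vote_decoding_fault_tolerant_general (t m w : ℕ) (ht : 1 ≤ t)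
    (hw : 1 ≤ w) (H : Matrix (Fin m) (Fin w) (ZMod 2))
    (hH : ∀ v : Fin w → ZMod 2, v ≠ 0 → hammingNorm v ≤ 2 * t → H.mulVec v ≠ 0)
    (e_s : Fin (N ((t + 1) ^ 2) m w H) → ZMod 2)
    (e_f : Fin ((t + 1) ^ 2) × Fin m → ZMod 2)
    (he : hammingNorm e_s + hammingNorm e_f ≤ t)
    (P : Fin ((t + 1) ^ 2) × Fin m → ZMod 2)
    (hP : P = (Fc ((t + 1) ^ 2) m w H).mulVec e_s + e_f) :
    (∃ Q : Fin m → ZMod 2,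
      t + 1 ≤ (Finset.univ.filter fun b : Fin ((t + 1) ^ 2) =>
        (fun i => P (b, i)) = Q).card) ∧
    (∀ Q : Fin m → ZMod 2,
      (∀ Q' : Fin m → ZMod 2,
        (Finset.univ.filter fun b : Fin ((t + 1) ^ 2) => (fun i => P (b, i)) = Q').card ≤
        (Finset.univ.filter fun b : Fin ((t + 1) ^ 2) => (fun i => P (b, i)) = Q).card) →
      (∃! u : Fin w → ZMod 2, hammingNorm u ≤ t ∧ H.mulVec u = Q) ∧
      (∀ u : Fin w → ZMod 2, hammingNorm u ≤ t → H.mulVec u = Q →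
        ∀ x : Fin (w + 1) → ZMod 2,
          x = (Dc ((t + 1) ^ 2) m w H).mulVec e_s +
              (fun j : Fin (w + 1) =>
                ∑ i ∈ Finset.univ.filter (fun i : Fin w => (i : ℕ) < (j : ℕ)), u i) →
          min (hammingNorm x) ((w + 1) - hammingNorm x) ≤
            hammingNorm e_s + hammingNorm e_f)) := by
  classical
  subst hP
  have hlen (i : Fin (w + 1)) : 0 < (block ((t + 1) ^ 2) m w H i).length := by
    rw [block_length]
    exact Nat.mul_pos (by positivity)
      (blockWeight_pos H hw (fun v hv hv2 => hH v hv (by omega)) i)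
  obtain ⟨M⟩ := nonempty_thresholdModel H hlen
  have hG := M.card_compl_goodReps_le e_s e_f
  have hGc := card_compl_add_card (M.goodReps e_s e_f)
  rw [Fintype.card_fin] at hGc
  have hsq : (t + 1) ^ 2 = t * (t + 1) + t + 1 := by ring
  have ha := Finset.exists_le_card_filter_eq
    ((M.card_image_subpattern_le e_s e_f).trans (by omega)) (k := t) (by omega)
  refine ⟨ha, fun Q hQ => ?_⟩
  obtain ⟨Q₀, hQ₀⟩ := ha
  obtain ⟨b, hbQ, hbG⟩ := Finset.exists_mem_notMem_of_card_lt_card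
    ((show (M.goodReps e_s e_f)ᶜ.card < t + 1 by omega).trans_le (hQ₀.trans (hQ Q₀)))
  rw [Finset.mem_compl, not_not] at hbG
  have hbQ : H *ᵥ M.seenError e_s b = Q :=
    (M.subpattern_eq e_s e_f hbG).symm.trans (Finset.mem_filter.1 hbQ).2
  have hwt : hammingNorm (M.seenError e_s b) ≤ t :=
    (M.hammingNorm_seenError_le e_s b).trans (by omega)
  have huniq := Matrix.existsUnique_mulVec_eq_of_hammingNorm_le hH hwt
  rw [hbQ] at huniq
  refine ⟨huniq, fun u hu hQu x hx => ?_⟩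
  rw [hx, huniq.unique ⟨hu, hQu⟩ ⟨hwt, hbQ⟩]
  exact (M.repDist_correction_le e_s b).trans (Nat.le_add_right _ _)

open Unfold in
/-- majority-vote decoding of the unfolded flag-gadget circuit with
`R = (t+1)^2` repetitions is fault-tolerant. For an error configuration `(e_s, e_f)` of
total weight at most `t` with observed flag pattern `P`: (a) the maximal multiplicity of a
subpattern `P_b = P (b, ·)` is at least `t+1`; and for every subpattern `Q` of maximal
multiplicity, (b) there is a unique `u` with `wt u ≤ t` and `H.mulVec u = Q`, and (c) the
correction `corr u` (flipping data qubit `j` according to the parity of `u` below `j`)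
is fault-tolerant. -/
theorem majority_vote_decoding_fault_tolerant (t m w : ℕ) (ht : 1 ≤ t) (hm : 1 ≤ m)
    (hw : 1 ≤ w) (H : Matrix (Fin m) (Fin w) (ZMod 2))
    (hH : ∀ v : Fin w → ZMod 2, v ≠ 0 → hammingNorm v ≤ 2 * t → H.mulVec v ≠ 0)
    (e_s : Fin (N ((t + 1) ^ 2) m w H) → ZMod 2)
    (e_f : Fin ((t + 1) ^ 2) × Fin m → ZMod 2)
    (he : hammingNorm e_s + hammingNorm e_f ≤ t)
    (P : Fin ((t + 1) ^ 2) × Fin m → ZMod 2)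
    (hP : P = (Fc ((t + 1) ^ 2) m w H).mulVec e_s + e_f) :
    (∃ Q : Fin m → ZMod 2,
      t + 1 ≤ (Finset.univ.filter fun b : Fin ((t + 1) ^ 2) =>
        (fun i => P (b, i)) = Q).card) ∧
    (∀ Q : Fin m → ZMod 2,
      (∀ Q' : Fin m → ZMod 2,
        (Finset.univ.filter fun b : Fin ((t + 1) ^ 2) => (fun i => P (b, i)) = Q').card ≤
        (Finset.univ.filter fun b : Fin ((t + 1) ^ 2) => (fun i => P (b, i)) = Q).card) →
      (∃! u : Fin w → ZMod 2, hammingNorm u ≤ t ∧ H.mulVec u = Q) ∧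
      (∀ u : Fin w → ZMod 2, hammingNorm u ≤ t → H.mulVec u = Q →
        ∀ x : Fin (w + 1) → ZMod 2,
          x = (Dc ((t + 1) ^ 2) m w H).mulVec e_s +
              (fun j : Fin (w + 1) =>
                ∑ i ∈ Finset.univ.filter (fun i : Fin w => (i : ℕ) < (j : ℕ)), u i) →
          min (hammingNorm x) ((w + 1) - hammingNorm x) ≤
            hammingNorm e_s + hammingNorm e_f)) :=
  majority_vote_decoding_fault_tolerant_general t m w ht hw H hH e_s e_f he P hP
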